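/- Let G be a finite connected network with distinct positive edge-lengths, T its minimum spanning tree, and T' any spanning tree. Then len(T') - len(T) ≥ Σ_{e ∈ T' \ T} exc(e), where exc(e) = len(e) - perc(e) and perc(e) = perc(v,w) for e = (v,w). -/

import Mathlib

open SimpleGraph Finset

/-- The subgraph of `G` consisting of edges of length `< t`. -/
def Gt {V : Type*} (G : SimpleGraph V) (len : Sym2 V → ℝ) (t : ℝ) : SimpleGraph V where
  Adj v w := G.Adj v w ∧ len s(v, w) < t
  symm := ⟨fun v w h => ⟨h.1.symm, by rw [Sym2.eq_swap]; exact h.2⟩⟩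
  loopless := ⟨fun v h => G.loopless.irrefl v h.1⟩

/-- `perc(v,w)`: the infimum of `t` such that `v` and `w` lie in the same component of `G_t`. -/
noncomputable def perc {V : Type*} (G : SimpleGraph V) (len : Sym2 V → ℝ) (v w : V) : ℝ :=
  sInf {t | (Gt G len t).Reachable v w}

/-- `T` (a finite set of edges) is a spanning tree of `G`. -/
def IsST {V : Type*} (G : SimpleGraph V) (T : Finset (Sym2 V)) : Prop :=
  ↑T ⊆ G.edgeSet ∧ (SimpleGraph.fromEdgeSet (↑T : Set (Sym2 V))).IsTree

/-- Total length of a set of edges. -/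
noncomputable def lenSum {V : Type*} (len : Sym2 V → ℝ) (T : Finset (Sym2 V)) : ℝ :=
  ∑ e ∈ T, len e

/-- `T` is a minimum spanning tree of `G`. -/
def IsMST {V : Type*} (G : SimpleGraph V) (len : Sym2 V → ℝ) (T : Finset (Sym2 V)) : Prop :=
  IsST G T ∧ ∀ T', IsST G T' → lenSum len T ≤ lenSum len T'

/-- `percE e`: `perc(v,w)` for an edge `e = (v,w)`. -/
noncomputable def percE {V : Type*} (G : SimpleGraph V) (len : Sym2 V → ℝ) (e : Sym2 V) : ℝ :=
  sInf {t | ∃ v w, e = s(v, w) ∧ (Gt G len t).Reachable v w}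

/-!
Exchange argument, by induction on `#(T' \ T)`. Pick `f = s(x, y) ∈ T' \ T`. The `T`-path from
`x` to `y` leaves the component of `x` in `T' - f` along some edge `e ∈ T`, so `T' - f + e` is a
spanning tree with one more edge in common with `T`. As `e` lies on the `T`-path, `T - e` separates
`x` from `y`; every `x`–`y` path in `G` crosses this cut, and by the cut property of the MST each
crossing edge is at least as long as `e`. Hence `len e ≤ perc f`, i.e. the exchange lowers the
length by `len f - len e ≥ exc f`.
-/

namespace SimpleGraph

variable {V : Type*} {H K : SimpleGraph V} {u v x y a b : V}

theorem Reachable.mem_of_adj_closed {S : Set V} (h : H.Reachable u v)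
    (hS : ∀ a b, H.Adj a b → a ∈ S → b ∈ S) (hu : u ∈ S) : v ∈ S := by
  by_contra hv
  obtain ⟨p⟩ := h
  obtain ⟨d, -, hd, hd'⟩ := p.exists_boundary_dart S hu hv
  exact hd' (hS _ _ d.adj hd)

theorem Reachable.exists_adj_not_reachable (h : H.Reachable u v) (hK : ¬K.Reachable u v) :
    ∃ a b, H.Adj a b ∧ ¬K.Reachable a b := by
  by_contra! hall
  exact hK <| h.mem_of_adj_closed (S := {z | K.Reachable u z})
    (fun a b hab ha => ha.trans (hall a b hab)) .rfl

theorem Reachable.reachable_deleteEdges_or (h : H.Reachable x u) :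
    (H.deleteEdges {s(x, y)}).Reachable x u ∨ (H.deleteEdges {s(x, y)}).Reachable y u := by
  refine h.mem_of_adj_closed (S := {z | _ ∨ _}) (fun a b hab ha => ?_) (Or.inl .rfl)
  by_cases hf : s(a, b) = s(x, y)
  · rcases Sym2.eq_iff.1 hf with ⟨-, rfl⟩ | ⟨-, rfl⟩
    · exact Or.inr .rfl
    · exact Or.inl .rfl
  · have hab' : (H.deleteEdges {s(x, y)}).Adj a b := by simp [hab, hf]
    exact ha.imp (·.trans hab'.reachable) (·.trans hab'.reachable)

theorem IsTree.deleteEdges_sup_edge (hH : H.IsTree) (hxy : H.Adj x y)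
    (hab : ¬(H.deleteEdges {s(x, y)}).Reachable a b) :
    (H.deleteEdges {s(x, y)} ⊔ edge a b).IsTree := by
  set K := H.deleteEdges {s(x, y)}
  have hK : K ≤ K ⊔ edge a b := le_sup_left
  have hne : a ≠ b := fun h => hab (h ▸ .rfl)
  have hab' : (K ⊔ edge a b).Adj a b := by simp [edge_adj, hne]
  have hxy' : (K ⊔ edge a b).Reachable x y := by
    have hcomp {c : V} := (hH.connected.preconnected x c).reachable_deleteEdges_or (y := y)
    rcases hcomp (c := a) with ha | ha <;> rcases hcomp (c := b) with hb | hb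
    · exact absurd (ha.symm.trans hb) hab
    · exact (ha.mono hK).trans (hab'.reachable.trans (hb.mono hK).symm)
    · exact (hb.mono hK).trans (hab'.reachable.symm.trans (ha.mono hK).symm)
    · exact absurd (ha.symm.trans hb) hab
  have := hH.connected.nonempty
  refine ⟨⟨fun u v => ?_⟩, (hH.isAcyclic.anti (deleteEdges_le _)).sup_edge_of_not_reachable hab⟩
  by_contra huv
  obtain ⟨c, d, hcd, hn⟩ := (hH.connected.preconnected u v).exists_adj_not_reachable huv
  by_cases hf : s(c, d) = s(x, y)
  · rcases Sym2.eq_iff.1 hf with ⟨rfl, rfl⟩ | ⟨rfl, rfl⟩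
    · exact hn hxy'
    · exact hn hxy'.symm
  · exact hn ((show K.Adj c d by simp [K, hcd, hf]).reachable.mono hK)

theorem IsAcyclic.not_reachable_deleteEdges_of_mem_edges (hH : H.IsAcyclic) {p : H.Walk x y}
    (hp : p.IsPath) {e : Sym2 V} (he : e ∈ p.edges) : ¬(H.deleteEdges {e}).Reachable x y := by
  classical
  induction e with | h v w => ?_
  rw [reachable_deleteEdges_iff_exists_walk]
  rintro ⟨q, hq⟩
  have hpq : (⟨p, hp⟩ : H.Path x y) = q.toPath := (hH.subsingleton_path x y).elim _ _
  exact hq (q.edges_toPath_subset_edges (by rw [← hpq]; exact he))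

end SimpleGraph

theorem percE_mk {V : Type*} (G : SimpleGraph V) (len : Sym2 V → ℝ) (x y : V) :
    percE G len s(x, y) = perc G len x y := by
  unfold percE perc
  simp [or_and_right, exists_or, reachable_comm]

section SpanningTrees

variable {V : Type*} [DecidableEq V] {G : SimpleGraph V} {len : Sym2 V → ℝ}
  {T T' : Finset (Sym2 V)} {f : Sym2 V} {x y a b : V}

theorem fromEdgeSet_insert_erase (T : Finset (Sym2 V)) (e f : Sym2 V) :
    fromEdgeSet ↑(insert e (T.erase f)) = (fromEdgeSet ↑T).deleteEdges {f} ⊔ fromEdgeSet {e} := by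
  rw [coe_insert, coe_erase, Set.insert_eq, fromEdgeSet_union, fromEdgeSet_sdiff, sup_comm]
  rfl

theorem notMem_erase_of_not_reachable_deleteEdges
    (h : ¬((fromEdgeSet ↑T).deleteEdges {f}).Reachable a b) : s(a, b) ∉ T.erase f := by
  have hne : a ≠ b := fun hab => h (hab ▸ .rfl)
  intro hab
  rw [mem_erase] at hab
  exact h (Adj.reachable (by simp [hne, hab.1, hab.2]))

theorem lenSum_insert_erase (len : Sym2 V → ℝ) {e : Sym2 V} (hf : f ∈ T) (he : e ∉ T.erase f) :
    lenSum len (insert e (T.erase f)) = lenSum len T - len f + len e := by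
  rw [lenSum, lenSum, sum_insert he, sum_erase_eq_sub hf]
  ring

theorem IsST.exchange (hT : IsST G T) (hf : s(x, y) ∈ T) (hab : G.Adj a b)
    (hsep : ¬((fromEdgeSet ↑T).deleteEdges {s(x, y)}).Reachable a b) :
    IsST G (insert s(a, b) (T.erase s(x, y))) := by
  refine ⟨?_, ?_⟩
  · rw [coe_insert, coe_erase]
    exact Set.insert_subset hab (Set.sdiff_subset.trans hT.1)
  · rw [fromEdgeSet_insert_erase]
    exact hT.2.deleteEdges_sup_edge ⟨hf, (hT.1 hf : G.Adj x y).ne⟩ hsep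

theorem IsMST.len_le_of_not_reachable (hT : IsMST G len T) (hf : s(x, y) ∈ T) (hab : G.Adj a b)
    (hsep : ¬((fromEdgeSet ↑T).deleteEdges {s(x, y)}).Reachable a b) :
    len s(x, y) ≤ len s(a, b) := by
  have hmin := hT.2 _ (hT.1.exchange hf hab hsep)
  rw [lenSum_insert_erase len hf (notMem_erase_of_not_reachable_deleteEdges hsep)] at hmin
  linarith

theorem IsMST.len_le_perc (hT : IsMST G len T) (hf : s(x, y) ∈ T) (hab : G.Adj a b)
    (hsep : ¬((fromEdgeSet ↑T).deleteEdges {s(x, y)}).Reachable a b) :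
    len s(x, y) ≤ perc G len a b := by
  refine le_csInf ⟨len s(a, b) + 1, Adj.reachable ⟨hab, lt_add_one _⟩⟩ fun t ht => ?_
  obtain ⟨c, d, hcd, hn⟩ := Reachable.exists_adj_not_reachable ht hsep
  exact (hT.len_le_of_not_reachable hf hcd.1 hn).trans hcd.2.le

theorem IsMST.exists_exchange (hT : IsMST G len T) (hT' : IsST G T') (hf : f ∈ T' \ T) :
    ∃ e ∈ T, IsST G (insert e (T'.erase f)) ∧ e ∉ T'.erase f ∧ len e ≤ percE G len f := by
  obtain ⟨hfT', hfT⟩ := mem_sdiff.1 hf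
  induction f with | h x y => ?_
  have hxy : G.Adj x y := hT'.1 hfT'
  set K := (fromEdgeSet ↑T').deleteEdges {s(x, y)}
  have hbridge : ¬K.Reachable x y := isBridge_iff.1 <|
    isAcyclic_iff_forall_adj_isBridge.1 hT'.2.isAcyclic ((fromEdgeSet_adj _).2 ⟨hfT', hxy.ne⟩)
  obtain ⟨p, hp⟩ := hT.1.2.connected.exists_isPath x y
  obtain ⟨d, hd, hxa, hxb⟩ := p.exists_boundary_dart {z | K.Reachable x z} .rfl hbridge
  have hab : ¬K.Reachable d.fst d.snd := fun h => hxb (hxa.trans h)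
  have hdT : s(d.fst, d.snd) ∈ T := (fromEdgeSet_adj _).1 d.adj |>.1
  refine ⟨_, hdT, hT'.exchange hfT' (hT.1.1 hdT) hab,
    notMem_erase_of_not_reachable_deleteEdges hab, ?_⟩
  rw [percE_mk]
  exact hT.len_le_perc hdT hxy
    (hT.1.2.isAcyclic.not_reachable_deleteEdges_of_mem_edges hp (List.mem_map_of_mem hd))

end SpanningTrees

theorem lenSum_sub_ge_sum_exc_general {V : Type*} [DecidableEq V]
    (G : SimpleGraph V) (len : Sym2 V → ℝ)
    (T T' : Finset (Sym2 V)) (hT : IsMST G len T) (hT' : IsST G T') :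
    lenSum len T' - lenSum len T ≥ ∑ e ∈ T' \ T, (len e - percE G len e) := by
  induction h : #(T' \ T) generalizing T' with
  | zero =>
    rw [card_eq_zero.1 h, sum_empty]
    linarith [hT.2 T' hT']
  | succ n ih =>
    obtain ⟨f, hf⟩ := card_pos.1 (by rw [h]; exact n.succ_pos)
    obtain ⟨e, heT, hST, he, hperc⟩ := hT.exists_exchange hT' hf
    have hrest : insert e (T'.erase f) \ T = (T' \ T).erase f := by
      rw [insert_sdiff_of_mem _ heT, erase_sdiff_comm]
    have hIH := ih _ hST (by rw [hrest, card_erase_of_mem hf, h, Nat.add_sub_cancel])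
    rw [lenSum_insert_erase len (mem_sdiff.1 hf).1 he, hrest] at hIH
    rw [← sum_erase_add _ _ hf]
    linarith

/-- If `T` is the MST and `T'` any spanning tree of a finite connected network with
distinct positive edge-lengths, then
`len(T') - len(T) ≥ ∑_{e ∈ T' \ T} exc(e)` where `exc(e) = len(e) - perc(e)`. -/
theorem lenSum_sub_ge_sum_exc {V : Type*} [Fintype V] [Nonempty V] [DecidableEq V]
    (G : SimpleGraph V) (hG : G.Connected) (len : Sym2 V → ℝ)
    (hpos : ∀ e ∈ G.edgeSet, 0 < len e) (hdist : Set.InjOn len G.edgeSet)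
    (T T' : Finset (Sym2 V)) (hT : IsMST G len T) (hT' : IsST G T') :
    lenSum len T' - lenSum len T ≥ ∑ e ∈ T' \ T, (len e - percE G len e) :=
  lenSum_sub_ge_sum_exc_general G len T T' hT hT'
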